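/- arXiv:2103.05197 — 2 statements merged into one kernel-verified Lean document; each statement's English description precedes it below -/
import Mathlib

section
/- If δ = (1 + αᵀ Ω̄ α)^{-1/2} ω Ω̄ α, where Ω̄ = ω⁻¹ Ω ω⁻¹ is the correlation matrix associated with a positive definite matrix Ω and ω is the diagonal matrix of square roots of diagonal entries of Ω, then α = (1 − δᵀ Ω⁻¹ δ)^{-1/2} ω Ω⁻¹ δ. -/
open Matrix

/-!
Put `β = ω⁻¹ α`. Since `ω` is symmetric, `ω Ω̄ α = Ω β` and `αᵀ Ω̄ α = βᵀ Ω β =: Q`, so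
`δ = (1 + Q)^{-1/2} Ω β`. Then `Ω⁻¹ δ = (1 + Q)^{-1/2} β` and `δᵀ Ω⁻¹ δ = Q / (1 + Q)`, hence
`1 - δᵀ Ω⁻¹ δ = (1 + Q)⁻¹`, and the two powers `(1 + Q)^{±1/2}` cancel in
`(1 - δᵀ Ω⁻¹ δ)^{-1/2} ω Ω⁻¹ δ = ω β = α`.
-/

namespace Matrix

variable {m R : Type*} [Fintype m] [DecidableEq m]

section CommRing

variable [CommRing R] {A : Matrix m m R}

theorem mulVec_nonsing_inv_mulVec (hA : IsUnit A.det) (v : m → R) : A *ᵥ (A⁻¹ *ᵥ v) = v := by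
  rw [mulVec_mulVec, mul_nonsing_inv A hA, one_mulVec]

theorem nonsing_inv_mulVec_mulVec (hA : IsUnit A.det) (v : m → R) : A⁻¹ *ᵥ (A *ᵥ v) = v := by
  rw [mulVec_mulVec, nonsing_inv_mul A hA, one_mulVec]

theorem mulVec_conj_nonsing_inv_mulVec (hA : IsUnit A.det) (B : Matrix m m R) (v : m → R) :
    A *ᵥ ((A⁻¹ * B * A⁻¹) *ᵥ v) = B *ᵥ (A⁻¹ *ᵥ v) := by
  rw [← mulVec_mulVec, ← mulVec_mulVec, mulVec_nonsing_inv_mulVec hA]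

theorem dotProduct_conj_nonsing_inv_mulVec (hA : Aᵀ = A) (B : Matrix m m R) (v : m → R) :
    v ⬝ᵥ ((A⁻¹ * B * A⁻¹) *ᵥ v) = (A⁻¹ *ᵥ v) ⬝ᵥ (B *ᵥ (A⁻¹ *ᵥ v)) := by
  have hA_inv : (A⁻¹)ᵀ = A⁻¹ := by rw [transpose_nonsing_inv, hA]
  rw [← mulVec_mulVec, ← mulVec_mulVec, dotProduct_mulVec, ← mulVec_transpose, hA_inv]

end CommRing

theorem isUnit_det_diagonal_sqrt_diag {A : Matrix m m ℝ} (hA : A.PosDef) :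
    IsUnit (diagonal fun i => Real.sqrt (A i i)).det := by
  rw [det_diagonal]
  exact (Finset.prod_pos fun _ _ => Real.sqrt_pos.2 hA.diag_pos).ne'.isUnit

end Matrix

theorem Real.one_sub_rpow_neg_half_sq_mul_rpow_neg_half {Q : ℝ} (hQ : 0 < 1 + Q) :
    (1 - ((1 + Q) ^ (-(1/2 : ℝ))) ^ 2 * Q) ^ (-(1/2 : ℝ)) * (1 + Q) ^ (-(1/2 : ℝ)) = 1 := by
  have hsq : ((1 + Q) ^ (-(1/2 : ℝ))) ^ 2 = (1 + Q)⁻¹ := by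
    rw [← Real.rpow_natCast, ← Real.rpow_mul hQ.le]
    norm_num [Real.rpow_neg_one]
  have hsub : 1 - (1 + Q)⁻¹ * Q = (1 + Q)⁻¹ := by
    field_simp
    ring
  rw [hsq, hsub, Real.inv_rpow hQ.le, ← Real.rpow_neg hQ.le, ← Real.rpow_add hQ]
  norm_num

namespace Matrix.PosDef

variable {m : Type*} [Fintype m] [DecidableEq m]

theorem eq_rpow_smul_inv_mulVec {A : Matrix m m ℝ} (hA : A.PosDef) (β δ : m → ℝ)
    (hδ : δ = (1 + β ⬝ᵥ (A *ᵥ β)) ^ (-(1/2 : ℝ)) • (A *ᵥ β)) :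
    β = (1 - δ ⬝ᵥ (A⁻¹ *ᵥ δ)) ^ (-(1/2 : ℝ)) • (A⁻¹ *ᵥ δ) := by
  set Q := β ⬝ᵥ (A *ᵥ β)
  set c := (1 + Q) ^ (-(1/2 : ℝ))
  have hQ : 0 < 1 + Q := by
    have := hA.posSemidef.dotProduct_mulVec_nonneg β
    simp only [star_trivial] at this
    linarith
  have hA_unit : IsUnit A.det := hA.det_pos.ne'.isUnit
  have hinv : A⁻¹ *ᵥ δ = c • β := by
    rw [hδ, mulVec_smul, nonsing_inv_mulVec_mulVec hA_unit]
  have hquad : δ ⬝ᵥ (A⁻¹ *ᵥ δ) = c ^ 2 * Q := by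
    rw [hinv, hδ, smul_dotProduct, dotProduct_smul, dotProduct_comm, smul_eq_mul, smul_eq_mul]
    ring
  rw [hquad, hinv, smul_smul, Real.one_sub_rpow_neg_half_sq_mul_rpow_neg_half hQ, one_smul]

end Matrix.PosDef

theorem stmt7_general {n : ℕ} (Ω : Matrix (Fin n) (Fin n) ℝ) (hΩ : Ω.PosDef)
    (ω : Matrix (Fin n) (Fin n) ℝ)
    (hω : ω = Matrix.diagonal fun i => Real.sqrt (Ω i i))
    (Ωbar : Matrix (Fin n) (Fin n) ℝ) (hΩbar : Ωbar = ω⁻¹ * Ω * ω⁻¹)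
    (α δ : Fin n → ℝ)
    (hδ : δ = (1 + α ⬝ᵥ (Ωbar *ᵥ α)) ^ (-(1/2 : ℝ)) • (ω *ᵥ (Ωbar *ᵥ α))) :
    α = (1 - δ ⬝ᵥ (Ω⁻¹ *ᵥ δ)) ^ (-(1/2 : ℝ)) • (ω *ᵥ (Ω⁻¹ *ᵥ δ)) := by
  have hω_unit : IsUnit ω.det := hω ▸ isUnit_det_diagonal_sqrt_diag hΩ
  have hω_symm : ωᵀ = ω := by rw [hω, diagonal_transpose]
  rw [hΩbar, mulVec_conj_nonsing_inv_mulVec hω_unit,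
    dotProduct_conj_nonsing_inv_mulVec hω_symm] at hδ
  calc α = ω *ᵥ (ω⁻¹ *ᵥ α) := (mulVec_nonsing_inv_mulVec hω_unit α).symm
    _ = _ := by rw [hΩ.eq_rpow_smul_inv_mulVec _ δ hδ, mulVec_smul]

/-- If `δ = (1 + αᵀ Ω̄ α)^{-1/2} ω Ω̄ α`, where `Ω̄ = ω⁻¹ Ω ω⁻¹` is the correlation
matrix of a positive definite `Ω` and `ω` is the diagonal matrix of square roots of
the diagonal entries of `Ω`, then `α = (1 − δᵀ Ω⁻¹ δ)^{-1/2} ω Ω⁻¹ δ`. -/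
theorem stmt7 {n : ℕ} (Ω : Matrix (Fin n) (Fin n) ℝ) (hΩ : Ω.PosDef)
    (hΩd : ∀ i, 0 < Ω i i)
    (ω : Matrix (Fin n) (Fin n) ℝ)
    (hω : ω = Matrix.diagonal fun i => Real.sqrt (Ω i i))
    (Ωbar : Matrix (Fin n) (Fin n) ℝ) (hΩbar : Ωbar = ω⁻¹ * Ω * ω⁻¹)
    (α δ : Fin n → ℝ)
    (hδ : δ = (1 + α ⬝ᵥ (Ωbar *ᵥ α)) ^ (-(1/2 : ℝ)) • (ω *ᵥ (Ωbar *ᵥ α))) :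
    α = (1 - δ ⬝ᵥ (Ω⁻¹ *ᵥ δ)) ^ (-(1/2 : ℝ)) • (ω *ᵥ (Ω⁻¹ *ᵥ δ)) :=
  stmt7_general Ω hΩ ω hω Ωbar hΩbar α δ hδ
end

section
/- The function f(z) = 2 φ(z) Φ(αz) is a probability density on ℝ for every α ∈ ℝ, i.e., ∫_ℝ 2 φ(z) Φ(αz) dz = 1. -/
open MeasureTheory Real

/-- The standard normal density. -/
noncomputable def stdNormalPDF (z : ℝ) : ℝ := (Real.sqrt (2 * π))⁻¹ * Real.exp (-z ^ 2 / 2)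

/-- The standard normal cumulative distribution function. -/
noncomputable def stdNormalCDF (z : ℝ) : ℝ := ∫ t in Set.Iic z, stdNormalPDF t

/-! If `f` is even and `g x + g (-x) = 1`, the reflection `x ↦ -x` turns `∫ f g` into
`∫ f (1 - g)`, so `∫ f g` is half of `∫ f`. Applied to `f = φ` and `g = Φ(α ·)`, where
`Φ(y) + Φ(-y) = 1` by the symmetry of `φ`, this gives `∫ 2 φ(z) Φ(α z) dz = ∫ φ = 1`. -/

theorem integral_mul_eq_half_of_even {f g : ℝ → ℝ} (hf : ∀ x, f (-x) = f x)
    (hfg : Integrable fun x ↦ f x * g x) (hg : ∀ x, g x + g (-x) = 1) :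
    ∫ x, f x * g x = (∫ x, f x) / 2 := by
  have hreflect : ∫ x, f x * g (-x) = ∫ x, f x * g x := by
    simpa only [hf] using integral_neg_eq_self (fun x ↦ f x * g x) volume
  have hsum : (∫ x, f x * g x) + ∫ x, f x * g (-x) = ∫ x, f x := by
    rw [← integral_add hfg (by simpa only [hf] using hfg.comp_neg)]
    simp only [← mul_add, hg, mul_one]
  linarith

lemma stdNormalPDF_eq_gaussianPDFReal : stdNormalPDF = ProbabilityTheory.gaussianPDFReal 0 1 := by
  funext x
  simp [stdNormalPDF, ProbabilityTheory.gaussianPDFReal, neg_div]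

lemma stdNormalPDF_nonneg (x : ℝ) : 0 ≤ stdNormalPDF x := by
  rw [stdNormalPDF_eq_gaussianPDFReal]
  exact ProbabilityTheory.gaussianPDFReal_nonneg 0 1 x

lemma integrable_stdNormalPDF : Integrable stdNormalPDF := by
  rw [stdNormalPDF_eq_gaussianPDFReal]
  exact ProbabilityTheory.integrable_gaussianPDFReal 0 1

lemma integral_stdNormalPDF : ∫ x, stdNormalPDF x = 1 := by
  rw [stdNormalPDF_eq_gaussianPDFReal]
  exact ProbabilityTheory.integral_gaussianPDFReal_eq_one 0 one_ne_zero

lemma stdNormalPDF_neg (x : ℝ) : stdNormalPDF (-x) = stdNormalPDF x := by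
  simp [stdNormalPDF]

lemma stdNormalCDF_nonneg (x : ℝ) : 0 ≤ stdNormalCDF x :=
  setIntegral_nonneg measurableSet_Iic fun t _ ↦ stdNormalPDF_nonneg t

lemma stdNormalCDF_le_one (x : ℝ) : stdNormalCDF x ≤ 1 := by
  rw [← integral_stdNormalPDF]
  exact setIntegral_le_integral integrable_stdNormalPDF (.of_forall stdNormalPDF_nonneg)

lemma stdNormalCDF_monotone : Monotone stdNormalCDF := fun _ _ hab ↦
  setIntegral_mono_set integrable_stdNormalPDF.integrableOn (.of_forall stdNormalPDF_nonneg)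
    (Set.Iic_subset_Iic.mpr hab).eventuallyLE

lemma stdNormalCDF_add_stdNormalCDF_neg (x : ℝ) : stdNormalCDF x + stdNormalCDF (-x) = 1 := by
  have hupper : stdNormalCDF (-x) = ∫ t in Set.Ioi x, stdNormalPDF t := by
    rw [stdNormalCDF, ← neg_neg x, ← integral_comp_neg_Iic]
    simp only [neg_neg, stdNormalPDF_neg]
  rw [stdNormalCDF, hupper, ← integral_stdNormalPDF, ← Set.compl_Iic]
  exact integral_add_compl measurableSet_Iic integrable_stdNormalPDF

lemma integrable_stdNormalPDF_mul_stdNormalCDF (α : ℝ) :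
    Integrable fun z ↦ stdNormalPDF z * stdNormalCDF (α * z) := by
  refine integrable_stdNormalPDF.mul_bdd (c := 1) ?_ (.of_forall fun z ↦ ?_)
  · exact (stdNormalCDF_monotone.measurable.comp (measurable_const_mul α)).aestronglyMeasurable
  · rw [Real.norm_eq_abs, abs_of_nonneg (stdNormalCDF_nonneg _)]
    exact stdNormalCDF_le_one _

/-- For every `α ∈ ℝ`, `z ↦ 2 φ(z) Φ(α z)` is a probability density on `ℝ`:
`∫ 2 φ(z) Φ(α z) dz = 1`. -/
theorem stmt13 (α : ℝ) :
    ∫ z : ℝ, 2 * stdNormalPDF z * stdNormalCDF (α * z) = 1 := by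
  have hhalf : ∫ z, stdNormalPDF z * stdNormalCDF (α * z) = 1 / 2 := by
    rw [integral_mul_eq_half_of_even stdNormalPDF_neg
      (integrable_stdNormalPDF_mul_stdNormalCDF α) fun z ↦ ?_, integral_stdNormalPDF]
    rw [mul_neg, stdNormalCDF_add_stdNormalCDF_neg]
  simp only [mul_assoc, integral_const_mul, hhalf]
  norm_num
end
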